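/- arXiv:1108.2808 — 2 statements merged into one kernel-verified Lean document; each statement's English description precedes it below -/
import Mathlib

section
/- For positive integers a_1,…,a_n (n ≥ 2), the chromatic polynomial of the clique-path L(a_1,…,a_n) satisfies P_{L(a_1,…,a_n)}(X) · ∏_{i=2}^{n−1}(X)_{a_i} = ∏_{i=1}^{n−1}(X)_{a_i + a_{i+1}}. -/
open Polynomial

/-- `P` is the chromatic polynomial of `G`: for every natural number `q`, evaluating `P`
at `q` gives the number of proper `q`-colourings of `G`. -/
def IsChromaticPoly {V : Type} (G : SimpleGraph V) (P : Polynomial ℤ) : Prop :=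
  ∀ q : ℕ, P.eval (q : ℤ) = Nat.card (G.Coloring (Fin q))

/-- The falling-factorial polynomial `(Y)_m = Y (Y-1) ⋯ (Y-m+1)`. -/
noncomputable def fallPoly (Y : Polynomial ℤ) (m : ℕ) : Polynomial ℤ :=
  ∏ t ∈ Finset.range m, (Y - C (t : ℤ))

/-- Vertices of the clique-path `L(a_1, …, a_n)`: a vertex of the `i`-th clique. -/
abbrev CliquePathVertex (L : List ℕ) : Type := Σ i : Fin L.length, Fin (L.get i)

/-- One-directional adjacency relation for a clique-path: same clique or next clique. -/
def cliquePathRel (L : List ℕ) : CliquePathVertex L → CliquePathVertex L → Prop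
  | ⟨i, _⟩, ⟨i', _⟩ => i.val = i'.val ∨ i.val + 1 = i'.val

/-- The clique-path `L(a_1,…,a_n)`: a path on `n` vertices whose `i`-th vertex is blown up
into a clique of size `a_i`, with all possible edges between neighbouring cliques. -/
def cliquePathGraph (L : List ℕ) : SimpleGraph (CliquePathVertex L) where
  Adj x y := x ≠ y ∧ (cliquePathRel L x y ∨ cliquePathRel L y x)
  symm := ⟨fun x y h => ⟨h.1.symm, h.2.symm⟩⟩
  loopless := ⟨fun x h => h.1 rfl⟩

/-!
Peeling off the first clique: a proper colouring of `L(a₁, …, aₙ)` is a proper colouring of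
`L(a₂, …, aₙ)` together with an injective colouring of the first clique avoiding the `a₂` colours
of the second one, so there are `(q - a₂)_{a₁}` extensions and the number of `q`-colourings is
`∏ᵢ (q - a_{i+1})_{aᵢ}` (with `a_{n+1} = 0`). Hence `P = ∏ᵢ (X - a_{i+1})_{aᵢ}`, and the identity
follows from `(X)_{a+b} = (X - b)_a (X)_b`.
-/

open SimpleGraph

lemma SimpleGraph.Coloring.injOn_of_isClique {V α : Type*} {G : SimpleGraph V}
    (c : G.Coloring α) {s : Set V} (hs : G.IsClique s) : Set.InjOn c s :=
  fun _ hv _ hw h => by_contra fun hne => c.valid (hs hv hw hne) h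

lemma cliquePathRel_iff {L : List ℕ} {v w : CliquePathVertex L} :
    cliquePathRel L v w ↔ v.1.val = w.1.val ∨ v.1.val + 1 = w.1.val := Iff.rfl

namespace CliquePathVertex

def consEquiv (a : ℕ) (l : List ℕ) : Fin a ⊕ CliquePathVertex l ≃ CliquePathVertex (a :: l) where
  toFun := Sum.elim (fun x => ⟨0, x⟩) (fun v => ⟨v.1.succ, v.2⟩)
  invFun
    | ⟨⟨0, _⟩, x⟩ => .inl x
    | ⟨⟨i + 1, h⟩, x⟩ => .inr ⟨⟨i, Nat.lt_of_succ_lt_succ h⟩, x⟩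
  left_inv := by rintro (x | v) <;> rfl
  right_inv := by rintro ⟨⟨_ | i, h⟩, x⟩ <;> rfl

@[simp] lemma consEquiv_inl_fst {a : ℕ} {l : List ℕ} (x : Fin a) :
    (consEquiv a l (.inl x)).1.val = 0 := rfl

@[simp] lemma consEquiv_inr_fst {a : ℕ} {l : List ℕ} (v : CliquePathVertex l) :
    (consEquiv a l (.inr v)).1.val = v.1.val + 1 := rfl

def headClique (L : List ℕ) : Set (CliquePathVertex L) := {v | v.1.val = 0}

lemma headClique_cons (b : ℕ) (l : List ℕ) :
    headClique (b :: l) = Set.range (consEquiv b l ∘ Sum.inl) := by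
  ext v
  obtain ⟨s | w, rfl⟩ := (consEquiv b l).surjective v
  · exact iff_of_true rfl ⟨s, rfl⟩
  · refine iff_of_false (Nat.succ_ne_zero _) ?_
    rintro ⟨s, hs⟩
    exact Sum.inl_ne_inr ((consEquiv b l).injective hs)

lemma ncard_headClique (L : List ℕ) : (headClique L).ncard = L.getD 0 0 := by
  cases L with
  | nil => simp [Set.eq_empty_of_forall_notMem fun v : CliquePathVertex [] => v.1.elim0]
  | cons b l =>
    rw [headClique_cons, Set.ncard_range_of_injective
      ((consEquiv b l).injective.comp Sum.inl_injective)]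
    simp

end CliquePathVertex

namespace cliquePathGraph

open CliquePathVertex

variable {α : Type*} {a : ℕ} {l : List ℕ}

lemma adj_inl_inl {x y : Fin a} :
    (cliquePathGraph (a :: l)).Adj (consEquiv a l (.inl x)) (consEquiv a l (.inl y)) ↔ x ≠ y := by
  simp [cliquePathGraph, cliquePathRel_iff, (consEquiv a l).injective.eq_iff]

lemma adj_inl_inr {x : Fin a} {v : CliquePathVertex l} :
    (cliquePathGraph (a :: l)).Adj (consEquiv a l (.inl x)) (consEquiv a l (.inr v)) ↔
      v ∈ headClique l := by
  simp [cliquePathGraph, cliquePathRel_iff, (consEquiv a l).injective.eq_iff, headClique, eq_comm]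

lemma adj_inr_inr {v w : CliquePathVertex l} :
    (cliquePathGraph (a :: l)).Adj (consEquiv a l (.inr v)) (consEquiv a l (.inr w)) ↔
      (cliquePathGraph l).Adj v w := by
  simp [cliquePathGraph, cliquePathRel_iff, (consEquiv a l).injective.eq_iff]

lemma isClique_headClique (L : List ℕ) : (cliquePathGraph L).IsClique (headClique L) :=
  fun _ hv _ hw hvw => ⟨hvw, .inl (.inl (hv.trans hw.symm))⟩

def tailEmbedding (a : ℕ) (l : List ℕ) : cliquePathGraph l ↪g cliquePathGraph (a :: l) where
  toEmbedding := Function.Embedding.inr.trans (consEquiv a l).toEmbedding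
  map_rel_iff' := adj_inr_inr

def extendColoring (g : (cliquePathGraph l).Coloring α) (e : Fin a ↪ ↥(g '' headClique l)ᶜ) :
    (cliquePathGraph (a :: l)).Coloring α :=
  Coloring.mk (fun v => Sum.elim (fun x => (e x : α)) g ((consEquiv a l).symm v)) <| by
    intro v w hvw
    obtain ⟨s, rfl⟩ := (consEquiv a l).surjective v
    obtain ⟨t, rfl⟩ := (consEquiv a l).surjective w
    simp only [Equiv.symm_apply_apply]
    rcases s with x | v <;> rcases t with y | w
    · exact fun h => adj_inl_inl.mp hvw (e.injective (Subtype.ext h))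
    · exact fun h => (e x).2 ⟨w, adj_inl_inr.mp hvw, h.symm⟩
    · exact fun h => (e y).2 ⟨v, adj_inl_inr.mp hvw.symm, h⟩
    · exact g.valid (adj_inr_inr.mp hvw)

def coloringFiberEquiv (g : (cliquePathGraph l).Coloring α) :
    {c : (cliquePathGraph (a :: l)).Coloring α // c.comp (tailEmbedding a l).toHom = g} ≃
      (Fin a ↪ ↥(g '' headClique l)ᶜ) where
  toFun c :=
    ⟨fun x => ⟨c.1 (consEquiv a l (.inl x)), by
      rintro ⟨w, hw, hcw⟩
      exact c.1.valid (adj_inl_inr.mpr hw) (hcw.symm.trans (congrArg (· w) c.2).symm)⟩,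
     fun x y h => by
      by_contra hne
      exact c.1.valid (adj_inl_inl.mpr hne) (congrArg Subtype.val h)⟩
  invFun e := ⟨extendColoring g e, rfl⟩
  left_inv c := by
    ext v
    obtain ⟨s | w, rfl⟩ := (consEquiv a l).surjective v
    · rfl
    · exact congrArg (· w) c.2.symm
  right_inv e := rfl

lemma card_coloring_cons [Finite α] :
    Nat.card ((cliquePathGraph (a :: l)).Coloring α) =
      (Nat.card α - l.getD 0 0).descFactorial a * Nat.card ((cliquePathGraph l).Coloring α) := by
  classical
  have card_fiber (g : (cliquePathGraph l).Coloring α) :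
      Nat.card {c : (cliquePathGraph (a :: l)).Coloring α // c.comp (tailEmbedding a l).toHom = g} =
        (Nat.card α - l.getD 0 0).descFactorial a := by
    have : Fintype α := Fintype.ofFinite α
    rw [Nat.card_congr (coloringFiberEquiv g), Nat.card_eq_fintype_card,
      Fintype.card_embedding_eq, Fintype.card_fin, ← Nat.card_eq_fintype_card,
      Nat.card_coe_set_eq, Set.ncard_compl,
      (g.injOn_of_isClique (isClique_headClique l)).ncard_image, ncard_headClique]
  have : Fintype ((cliquePathGraph l).Coloring α) := Fintype.ofFinite _
  rw [Nat.card_congr (Equiv.sigmaFiberEquiv fun c : (cliquePathGraph (a :: l)).Coloring α =>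
    c.comp (tailEmbedding a l).toHom).symm, Nat.card_sigma]
  simp only [card_fiber, Finset.sum_const, Finset.card_univ, smul_eq_mul,
    Nat.card_eq_fintype_card, mul_comm]

lemma card_coloring_nil : Nat.card ((cliquePathGraph []).Coloring α) = 1 :=
  Nat.card_eq_one_iff_unique.mpr
    ⟨⟨fun _ _ => RelHom.ext fun v => v.1.elim0⟩,
      ⟨Coloring.mk (fun v => v.1.elim0) fun {v} => v.1.elim0⟩⟩

theorem card_coloring [Finite α] (L : List ℕ) :
    Nat.card ((cliquePathGraph L).Coloring α) =
      ∏ i ∈ Finset.range L.length, (Nat.card α - L.getD (i + 1) 0).descFactorial (L.getD i 0) := by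
  induction L with
  | nil => exact card_coloring_nil
  | cons a l ih =>
    rw [card_coloring_cons, ih, List.length_cons, Finset.prod_range_succ', mul_comm]
    simp only [List.getD_cons_succ, List.getD_cons_zero]

end cliquePathGraph

lemma List.getD_le_sum (L : List ℕ) (j : ℕ) : L.getD j 0 ≤ L.sum := by
  rw [List.getD_eq_getElem?_getD]
  cases h : L[j]? with
  | none => simp
  | some x => exact List.le_sum_of_mem (List.mem_of_getElem? h)

lemma eval_fallPoly (Y : ℤ[X]) (m : ℕ) (r : ℤ) :
    (fallPoly Y m).eval r = (descPochhammer ℤ m).eval (Y.eval r) := by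
  simp [fallPoly, eval_prod, descPochhammer_eval_eq_prod_range]

lemma eval_fallPoly_X_sub_C {a b q : ℕ} (h : b ≤ q) :
    (fallPoly (X - C (b : ℤ)) a).eval (q : ℤ) = (q - b).descFactorial a := by
  rw [eval_fallPoly, eval_sub, eval_X, eval_C, ← Nat.cast_sub h,
    descPochhammer_eval_eq_descFactorial]

/-- The integer `(q - b)_a` is `Nat.descFactorial` of the truncated difference only for `b ≤ q`,
so the two sides are compared at the points `q ≥ L.sum`. -/
theorem IsChromaticPoly.eq_prod_fallPoly {L : List ℕ} {P : ℤ[X]}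
    (hP : IsChromaticPoly (cliquePathGraph L) P) :
    P = ∏ i ∈ Finset.range L.length, fallPoly (X - C (L.getD (i + 1) 0 : ℤ)) (L.getD i 0) := by
  refine eq_of_infinite_eval_eq _ _ <| Set.infinite_of_injective_forall_mem
    (f := fun n : ℕ => ((n + L.sum : ℕ) : ℤ)) (fun m n h => by simpa using h) fun n => ?_
  rw [Set.mem_ofPred_eq, hP, cliquePathGraph.card_coloring, Nat.card_fin, Nat.cast_prod,
    eval_prod]
  exact Finset.prod_congr rfl fun i _ =>
    (eval_fallPoly_X_sub_C ((L.getD_le_sum _).trans (Nat.le_add_left _ _))).symm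

lemma fallPoly_add (Y : ℤ[X]) (a b : ℕ) :
    fallPoly Y (a + b) = fallPoly (Y - C (b : ℤ)) a * fallPoly Y b := by
  simp only [fallPoly, add_comm a, Finset.prod_range_add, Nat.cast_add, C_add, sub_sub, mul_comm]

lemma prod_fallPoly_mul_prod_Ico {L : List ℕ} (hL : 2 ≤ L.length) (Y : ℤ[X]) :
    (∏ i ∈ Finset.range L.length, fallPoly (Y - C (L.getD (i + 1) 0 : ℤ)) (L.getD i 0)) *
        ∏ i ∈ Finset.Ico 1 (L.length - 1), fallPoly Y (L.getD i 0) =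
      ∏ i ∈ Finset.range (L.length - 1), fallPoly Y (L.getD i 0 + L.getD (i + 1) 0) := by
  obtain ⟨m, hm⟩ : ∃ m, L.length = m + 2 := ⟨L.length - 2, by omega⟩
  have last : L.getD (m + 2) 0 = 0 := List.getD_eq_default _ _ hm.le
  have shift : ∏ i ∈ Finset.range (m + 1), fallPoly Y (L.getD (i + 1) 0) =
      (∏ i ∈ Finset.Ico 1 (m + 1), fallPoly Y (L.getD i 0)) * fallPoly Y (L.getD (m + 1) 0) := by
    rw [← Finset.prod_Ico_succ_top (by omega), Finset.prod_Ico_eq_prod_range]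
    simp only [add_comm 1, Nat.add_sub_cancel]
  rw [hm, Finset.prod_range_succ, last, Nat.cast_zero, C_0, sub_zero,
    show m + 2 - 1 = m + 1 by omega]
  simp only [fallPoly_add, Finset.prod_mul_distrib, shift]
  ring

theorem chromatic_poly_of_clique_path_general
    (L : List ℕ) (hlen : 2 ≤ L.length)
    (P : Polynomial ℤ) (hP : IsChromaticPoly (cliquePathGraph L) P) :
    P * ∏ i ∈ Finset.Ico 1 (L.length - 1), fallPoly X (L.getD i 0)
      = ∏ i ∈ Finset.range (L.length - 1), fallPoly X (L.getD i 0 + L.getD (i + 1) 0) := by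
  rw [hP.eq_prod_fallPoly, prod_fallPoly_mul_prod_Ico hlen]

/-- The chromatic polynomial of the clique-path `L(a_1,…,a_n)` satisfies
`P · ∏_{i=2}^{n-1} (X)_{a_i} = ∏_{i=1}^{n-1} (X)_{a_i + a_{i+1}}` (here `L.getD i 0` is
`a_{i+1}` in 0-based indexing). -/
theorem chromatic_poly_of_clique_path
    (L : List ℕ) (hlen : 2 ≤ L.length) (hpos : ∀ a ∈ L, 0 < a)
    (P : Polynomial ℤ) (hP : IsChromaticPoly (cliquePathGraph L) P) :
    P * ∏ i ∈ Finset.Ico 1 (L.length - 1), fallPoly X (L.getD i 0)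
      = ∏ i ∈ Finset.range (L.length - 1), fallPoly X (L.getD i 0 + L.getD (i + 1) 0) :=
  chromatic_poly_of_clique_path_general L hlen P hP
end

section
/- Let n ≥ 2, let S_1,…,S_n be nonempty ordered tuples of positive integers with S_i = (a_{i(1)},…,a_{i(m_i)}), let k be a positive integer, and for a positive integer p let pS_i = (p·a_{i(1)},…,p·a_{i(m_i)}). If α is a non-integer complex chromatic root of the clique-theta graph T(1,S_1,…,S_n,k), then p·α is a chromatic root of the clique-theta graph T(1,pS_1,…,pS_n,pk). -/
/-!
Colour the vertex `u` of the initial 1-clique first, then the terminal `k`-clique, and then each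
clique-path from its terminal end towards `u`. Along a path the only information to carry is
whether the colour of `u` occurs on the clique just coloured, so `P(q)` is a sum over two states
of products of 2 × 2 transfer entries, each a falling factorial in `q`.

Replacing every clique size `a` by `p a` and `q` by `p q` multiplies all transfer entries of a
clique by the same factor `p ^ a * blockFactor p z a` (`z` being `q` minus the size of the next
clique), which agrees with an integer polynomial in `q` for large `q`. Hence
`P'(p X) = R(X) P(X)` for some `R ∈ ℤ[X]`, and `P(α) = 0` forces `P'(p α) = 0`.
-/

open Polynomial

/-- Vertices of the clique-theta graph `T(j, S_1, …, S_n, k)`: a vertex of the initial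
`j`-clique, a vertex of the `l`-th internal clique of the `i`-th clique-path, or a vertex
of the terminal `k`-clique. -/
abbrev CliqueThetaVertex (j : ℕ) {n : ℕ} (S : Fin n → List ℕ) (k : ℕ) : Type :=
  Fin j ⊕ ((Σ i : Fin n, Σ l : Fin (S i).length, Fin ((S i).get l)) ⊕ Fin k)

/-- One-directional adjacency relation for a clique-theta graph: same clique, or
consecutive cliques along one of the clique-paths. -/
def cliqueThetaRel (j : ℕ) {n : ℕ} (S : Fin n → List ℕ) (k : ℕ) :
    CliqueThetaVertex j S k → CliqueThetaVertex j S k → Prop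
  | Sum.inl _, Sum.inl _ => True
  | Sum.inl _, Sum.inr (Sum.inl ⟨_, l, _⟩) => l.val = 0
  | Sum.inr (Sum.inl ⟨i, l, _⟩), Sum.inr (Sum.inr _) => l.val + 1 = (S i).length
  | Sum.inr (Sum.inr _), Sum.inr (Sum.inr _) => True
  | Sum.inr (Sum.inl ⟨i, l, _⟩), Sum.inr (Sum.inl ⟨i', l', _⟩) =>
      i.val = i'.val ∧ (l.val = l'.val ∨ l.val + 1 = l'.val)
  | _, _ => False

/-- The clique-theta graph `T(j, S_1, …, S_n, k)`, obtained from the clique-paths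
`L(j, S_i, k)`, `1 ≤ i ≤ n`, by identifying their initial `j`-cliques into a single
`j`-clique and their terminal `k`-cliques into a single `k`-clique. -/
def cliqueThetaGraph (j : ℕ) {n : ℕ} (S : Fin n → List ℕ) (k : ℕ) :
    SimpleGraph (CliqueThetaVertex j S k) where
  Adj x y := x ≠ y ∧ (cliqueThetaRel j S k x y ∨ cliqueThetaRel j S k y x)
  symm := ⟨fun x y h => ⟨h.1.symm, h.2.symm⟩⟩
  loopless := ⟨fun x h => h.1 rfl⟩

open Finset Function

namespace Nat

theorem descFactorial_add (n a b : ℕ) :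
    n.descFactorial (a + b) = n.descFactorial a * (n - a).descFactorial b := by
  rw [← descFactorial_mul_descFactorial (le_add_right a b), Nat.add_sub_cancel_left, mul_comm]

theorem descFactorial_succ_eq_mul (n k : ℕ) :
    n.descFactorial (k + 1) = n * (n - 1).descFactorial k := by
  cases n with
  | zero => simp
  | succ n => exact succ_descFactorial_succ n k

theorem succ_descFactorial_succ_eq_add (n k : ℕ) :
    (n + 1).descFactorial (k + 1) = n.descFactorial (k + 1) + (k + 1) * n.descFactorial k := by
  rw [succ_descFactorial_succ, descFactorial_succ]
  rcases le_or_gt k n with h | h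
  · rw [← Nat.add_mul]
    congr 1
    omega
  · simp [descFactorial_of_lt h]

theorem card_subtype_eq_sum_bool {α : Type*} [Finite α] (P : α → Prop) (t : α → Bool) :
    Nat.card {a // P a} = ∑ b, Nat.card {a // P a ∧ t a = b} := by
  classical
  have := Fintype.ofFinite α
  simp only [Nat.card_eq_fintype_card, Fintype.card_subtype, Fintype.sum_bool]
  rw [← filter_filter, ← filter_filter, ← card_filter_add_card_filter_not (t · = true)]
  simp

theorem card_subtype_prod_eq_sum_bool {α β : Type*} [Fintype α] [Finite β] (P : α → Prop)
    (Q : α → β → Prop) (t : α → Bool) (F : Bool → ℕ)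
    (hQ : ∀ a, P a → Nat.card {b // Q a b} = F (t a)) :
    Nat.card {c : α × β // P c.1 ∧ Q c.1 c.2} = ∑ b, Nat.card {a // P a ∧ t a = b} * F b := by
  classical
  let e : {c : α × β // P c.1 ∧ Q c.1 c.2} ≃ Σ a : {a // P a}, {b // Q a b} :=
    { toFun c := ⟨⟨c.1.1, c.2.1⟩, ⟨c.1.2, c.2.2⟩⟩
      invFun s := ⟨(s.1.1, s.2.1), s.1.2, s.2.2⟩ }
  rw [Nat.card_congr e, Nat.card_sigma,
    Fintype.sum_congr _ (fun a : {a // P a} => F (t a)) fun a => hQ a.1 a.2,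
    ← Fintype.sum_fiberwise' (fun a : {a // P a} => t a)]
  refine Fintype.sum_congr _ _ fun b => ?_
  rw [Finset.sum_const, Finset.card_univ, smul_eq_mul, ← Nat.card_eq_fintype_card]
  exact congrArg (· * F b) (Nat.card_congr (Equiv.subtypeSubtypeEquivSubtypeInter P (t · = b)))

end Nat

namespace CliqueTheta

-- The factors of `(p z).descFactorial (p a)` that are not multiples of `p`:
-- `a` blocks of `p - 1` consecutive integers.
def blockFactor (p z a : ℕ) : ℕ :=
  ∏ u ∈ range a, (p * (z - u) - 1).descFactorial (p - 1)

theorem blockFactor_succ (p z a : ℕ) :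
    blockFactor p z (a + 1) = blockFactor p z a * (p * (z - a) - 1).descFactorial (p - 1) :=
  prod_range_succ _ _

section Scaling

variable {p : ℕ} (hp : 0 < p)
include hp

theorem mul_descFactorial_mul (z a : ℕ) :
    (p * z).descFactorial (p * a) = p ^ a * z.descFactorial a * blockFactor p z a := by
  induction a with
  | zero => simp [blockFactor]
  | succ a ih =>
    have hblock : (p * (z - a)).descFactorial p =
        p * (z - a) * (p * (z - a) - 1).descFactorial (p - 1) := by
      rw [← Nat.descFactorial_succ_eq_mul, Nat.sub_add_cancel hp]
    rw [Nat.mul_succ, Nat.descFactorial_add, ih, ← Nat.mul_sub, hblock, blockFactor_succ,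
      Nat.descFactorial_succ, pow_succ]
    ring

theorem mul_sub_one_descFactorial_mul (z a : ℕ) :
    (p * z - 1).descFactorial (p * a) = p ^ a * (z - 1).descFactorial a * blockFactor p z a := by
  induction a with
  | zero => simp [blockFactor]
  | succ a ih =>
    have hblock : (p * (z - a) - 1).descFactorial p =
        p * (z - a - 1) * (p * (z - a) - 1).descFactorial (p - 1) := by
      obtain ⟨p, rfl⟩ := Nat.exists_eq_add_one_of_ne_zero hp.ne'
      rw [Nat.descFactorial_succ, Nat.add_sub_cancel, Nat.mul_sub_one, Nat.sub_sub,
        Nat.add_comm 1]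
    rw [Nat.mul_succ, Nat.descFactorial_add, ih, Nat.sub_sub, Nat.add_comm 1, ← Nat.sub_sub,
      ← Nat.mul_sub, hblock, blockFactor_succ, Nat.descFactorial_succ, pow_succ,
      Nat.sub_right_comm z 1 a]
    ring

theorem mul_mul_sub_one_descFactorial_pred (z a : ℕ) :
    p * (p * z - 1).descFactorial (p * (a + 1) - 1) =
      p ^ (a + 1) * (z - 1).descFactorial a * blockFactor p z (a + 1) := by
  have hidx : p * (a + 1) - 1 = p * a + (p - 1) := by
    rw [Nat.mul_succ]
    omega
  rw [hidx, Nat.descFactorial_add, mul_sub_one_descFactorial_mul hp, Nat.sub_sub, Nat.add_comm 1,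
    ← Nat.sub_sub, ← Nat.mul_sub, blockFactor_succ, pow_succ]
  ring

end Scaling

-- `transfer q s a b₀ b` counts colourings of an `a`-clique avoiding `s` given colours, where
-- `b₀` says whether a distinguished colour is among the given ones and `b` whether it is used.
def transfer (q s a : ℕ) : Bool → Bool → ℕ
  | true, true => 0
  | true, false => (q - s).descFactorial a
  | false, true => a * (q - s - 1).descFactorial (a - 1)
  | false, false => (q - s - 1).descFactorial a

theorem transfer_mul {p : ℕ} (hp : 0 < p) (q s a : ℕ) (b₀ b : Bool) :
    transfer (p * q) (p * s) (p * a) b₀ b =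
      p ^ a * blockFactor p (q - s) a * transfer q s a b₀ b := by
  cases b₀ <;> cases b <;> simp only [transfer, ← Nat.mul_sub]
  · rw [mul_sub_one_descFactorial_mul hp, Nat.sub_sub, Nat.add_comm s 1, ← Nat.sub_sub]
    ring
  · cases a with
    | zero => simp
    | succ a =>
      rw [Nat.add_sub_cancel, Nat.mul_right_comm p, mul_mul_sub_one_descFactorial_pred hp]
      ring
  · rw [mul_descFactorial_mul hp]
    ring
  · simp

theorem card_injective_avoid (q a : ℕ) (Z : Finset (Fin q)) :
    Nat.card {h : Fin a → Fin q // Injective h ∧ ∀ v, h v ∉ Z} = (q - #Z).descFactorial a := by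
  classical
  let e : {h : Fin a → Fin q // Injective h ∧ ∀ v, h v ∉ Z} ≃ (Fin a ↪ {y // y ∉ Z}) :=
    { toFun h := ⟨fun v => ⟨h.1 v, h.2.2 v⟩, fun v v' hv => h.2.1 (congrArg Subtype.val hv)⟩
      invFun e := ⟨fun v => e v, fun v v' hv => e.injective (Subtype.ext hv), fun v => (e v).2⟩ }
  rw [Nat.card_congr e, Nat.card_eq_fintype_card, Fintype.card_embedding_eq, Fintype.card_fin,
    Fintype.card_subtype_compl, Fintype.card_fin, Fintype.card_coe]

theorem card_injective_avoid_of_notMem {q a : ℕ} {W : Finset (Fin q)} {x : Fin q} (hx : x ∉ W) :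
    Nat.card {h : Fin a → Fin q //
      Injective h ∧ (∀ v, h v ∉ W) ∧ decide (x ∈ univ.image h) = false} =
        (q - #W - 1).descFactorial a := by
  rw [Nat.sub_sub, ← card_insert_of_notMem hx, ← card_injective_avoid]
  refine Nat.card_congr (Equiv.subtypeEquivRight fun h => ?_)
  simp only [decide_eq_false_iff_not, mem_image, mem_univ, true_and, not_exists, mem_insert,
    not_or]
  exact ⟨fun hh => ⟨hh.1, fun v => ⟨fun hv => hh.2.2 v hv, hh.2.1 v⟩⟩,
    fun hh => ⟨hh.1, fun v => (hh.2 v).2, fun v => (hh.2 v).1⟩⟩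

theorem card_injective_avoid_eq_transfer (q a : ℕ) (W : Finset (Fin q)) (x : Fin q) (b : Bool) :
    Nat.card {h : Fin a → Fin q // Injective h ∧ (∀ v, h v ∉ W) ∧ decide (x ∈ univ.image h) = b}
      = transfer q #W a (decide (x ∈ W)) b := by
  classical
  by_cases hx : x ∈ W
  · rw [decide_eq_true hx]
    cases b
    · rw [transfer, ← card_injective_avoid]
      refine Nat.card_congr (Equiv.subtypeEquivRight fun h => ?_)
      simp only [decide_eq_false_iff_not, mem_image, mem_univ, true_and, not_exists]
      exact ⟨fun hh => ⟨hh.1, hh.2.1⟩, fun hh => ⟨hh.1, hh.2, fun v hv => hh.2 v (hv ▸ hx)⟩⟩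
    · refine Nat.card_eq_zero.mpr (.inl ⟨fun ⟨h, _, hW, hmem⟩ => ?_⟩)
      obtain ⟨v, -, rfl⟩ := mem_image.mp (of_decide_eq_true hmem)
      exact hW v hx
  · rw [decide_eq_false hx]
    cases b
    · exact card_injective_avoid_of_notMem hx
    · have hcard : #W < q := by
        have := card_le_univ (insert x W)
        rw [card_insert_of_notMem hx, Fintype.card_fin] at this
        omega
      have hsplit := Nat.card_subtype_eq_sum_bool
        (fun h : Fin a → Fin q => Injective h ∧ ∀ v, h v ∉ W) (fun h => decide (x ∈ univ.image h))
      simp only [card_injective_avoid, Fintype.sum_bool, and_assoc,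
        card_injective_avoid_of_notMem hx] at hsplit
      obtain ⟨m, hm⟩ : ∃ m, q - #W = m + 1 := ⟨q - #W - 1, by omega⟩
      rw [hm, Nat.add_sub_cancel] at hsplit
      rw [transfer, Nat.sub_sub, ← Nat.sub_sub, hm, Nat.add_sub_cancel]
      cases a with
      | zero => simp
      | succ a =>
        rw [Nat.succ_descFactorial_succ_eq_add] at hsplit
        simp only [Nat.add_sub_cancel]
        omega

abbrev PathVertex (L : List ℕ) : Type := Σ l : Fin L.length, Fin (L.get l)

theorem PathVertex.forall_cons {a : ℕ} {L : List ℕ} {P : PathVertex (a :: L) → Prop} :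
    (∀ u, P u) ↔ (∀ v : Fin a, P ⟨0, v⟩) ∧ ∀ u : PathVertex L, P ⟨u.1.succ, u.2⟩ :=
  ⟨fun h => ⟨fun v => h _, fun u => h _⟩, fun h => by
    rintro ⟨⟨_ | l, hl⟩, v⟩
    exacts [h.1 v, h.2 ⟨⟨l, Nat.succ_lt_succ_iff.mp hl⟩, v⟩]⟩

theorem PathVertex.succ_ne_succ {a : ℕ} {L : List ℕ} {u v : PathVertex L} (h : u ≠ v) :
    (⟨u.1.succ, u.2⟩ : PathVertex (a :: L)) ≠ ⟨v.1.succ, v.2⟩ := by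
  obtain ⟨l, u⟩ := u
  obtain ⟨l', v⟩ := v
  intro heq
  simp only [Sigma.mk.injEq, Fin.succ_inj] at heq
  obtain ⟨rfl, huv⟩ := heq
  exact h (by rw [eq_of_heq huv])

variable {q : ℕ}

def PathProper (Y : Finset (Fin q)) (L : List ℕ) (f : PathVertex L → Fin q) : Prop :=
  (∀ u v : PathVertex L, u ≠ v → (u.1 : ℕ) = v.1 ∨ (u.1 : ℕ) + 1 = v.1 → f u ≠ f v) ∧
    ∀ u : PathVertex L, (u.1 : ℕ) + 1 = L.length → f u ∉ Y

def headCol {a : ℕ} {L : List ℕ} (f : PathVertex (a :: L) → Fin q) : Fin a → Fin q :=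
  fun v => f ⟨0, v⟩

def tailCol {a : ℕ} {L : List ℕ} (f : PathVertex (a :: L) → Fin q) : PathVertex L → Fin q :=
  fun u => f ⟨u.1.succ, u.2⟩

-- The colours that a clique prepended to the path must avoid: those of the first clique, or
-- the terminal colours `Y` for the empty path.
def headColours (Y : Finset (Fin q)) : (L : List ℕ) → (PathVertex L → Fin q) → Finset (Fin q)
  | [], _ => Y
  | _ :: _, f => univ.image (headCol f)

theorem mem_headColours_of_ne_nil {Y : Finset (Fin q)} {L : List ℕ} (hL : L ≠ [])
    {f : PathVertex L → Fin q} {x : Fin q} :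
    x ∈ headColours Y L f ↔ ∃ u : PathVertex L, (u.1 : ℕ) = 0 ∧ f u = x := by
  cases L with
  | nil => exact absurd rfl hL
  | cons a L =>
    simp only [headColours, mem_image, mem_univ, true_and, headCol]
    refine ⟨fun ⟨v, hv⟩ => ⟨⟨0, v⟩, rfl, hv⟩, ?_⟩
    rintro ⟨⟨⟨_ | l, hl⟩, v⟩, h0, rfl⟩
    exacts [⟨v, rfl⟩, absurd h0 (Nat.succ_ne_zero l)]

theorem pathProper_cons_iff {Y : Finset (Fin q)} {a : ℕ} {L : List ℕ}
    (f : PathVertex (a :: L) → Fin q) :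
    PathProper Y (a :: L) f ↔ PathProper Y L (tailCol f) ∧
      Injective (headCol f) ∧ ∀ v, headCol f v ∉ headColours Y L (tailCol f) := by
  constructor
  · rintro ⟨hadj, hlast⟩
    refine ⟨⟨fun u v huv hrel => hadj _ _ (PathVertex.succ_ne_succ huv) (by simpa using hrel),
      fun u hu => hlast _ (by simpa using hu)⟩,
      fun v w hvw => by_contra fun hne =>
        hadj ⟨0, v⟩ ⟨0, w⟩ (fun h => hne (eq_of_heq (Sigma.mk.inj_iff.mp h).2)) (.inl rfl) hvw,
      fun v => ?_⟩
    cases L with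
    | nil => exact hlast ⟨0, v⟩ rfl
    | cons b L =>
      intro hmem
      obtain ⟨u, hu0, hu⟩ := (mem_headColours_of_ne_nil (List.cons_ne_nil b L)).mp hmem
      exact hadj ⟨0, v⟩ _ (fun h => Fin.succ_ne_zero _ (Sigma.mk.inj_iff.mp h).1.symm)
        (.inr (by simp [hu0])) hu.symm
  · rintro ⟨⟨hadj, hlast⟩, hinj, hhead⟩
    refine ⟨?_, ?_⟩
    · rw [PathVertex.forall_cons]
      refine ⟨fun v => PathVertex.forall_cons.mpr ⟨fun w hne _ => ?_, fun u _ hrel => ?_⟩,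
        fun u => PathVertex.forall_cons.mpr ⟨fun w _ hrel => ?_, fun u' hne hrel => ?_⟩⟩
      · exact hinj.ne (by rintro rfl; exact hne rfl)
      · cases L with
        | nil => exact u.1.elim0
        | cons b L =>
          refine fun heq => hhead v
            ((mem_headColours_of_ne_nil (List.cons_ne_nil b L)).mpr ⟨u, ?_, heq.symm⟩)
          simp only [Fin.val_zero, Fin.val_succ] at hrel
          omega
      · simp only [Fin.val_zero, Fin.val_succ] at hrel
        omega
      · exact hadj u u' (by rintro rfl; exact hne rfl) (by simpa using hrel)
    · rw [PathVertex.forall_cons]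
      refine ⟨fun v hv => ?_, fun u hu => hlast u (by simpa using hu)⟩
      cases L with
      | nil => exact hhead v
      | cons b L => simp at hv

theorem card_headColours {k : ℕ} {Y : Finset (Fin q)} (hY : #Y = k) :
    ∀ {L : List ℕ} {f : PathVertex L → Fin q}, PathProper Y L f →
      #(headColours Y L f) = L.headD k
  | [], _, _ => hY
  | a :: _, f, hf => by
    rw [headColours, card_image_of_injective _ ((pathProper_cons_iff f).mp hf).2.1, card_univ,
      Fintype.card_fin, List.headD_cons]

def consEquiv (a : ℕ) (L : List ℕ) :
    (PathVertex (a :: L) → Fin q) ≃ (PathVertex L → Fin q) × (Fin a → Fin q) where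
  toFun f := (tailCol f, headCol f)
  invFun gh
    | ⟨⟨0, _⟩, v⟩ => gh.2 v
    | ⟨⟨l + 1, hl⟩, v⟩ => gh.1 ⟨⟨l, Nat.succ_lt_succ_iff.mp hl⟩, v⟩
  left_inv f := funext <| by rintro ⟨⟨_ | l, hl⟩, v⟩ <;> rfl
  right_inv gh := rfl

def pathWeight (q k : ℕ) (b₀ : Bool) : List ℕ → Bool → ℕ
  | [], b => if b₀ = b then 1 else 0
  | a :: L, b => ∑ b', pathWeight q k b₀ L b' * transfer q (L.headD k) a b' b

theorem card_pathProper {k : ℕ} {Y : Finset (Fin q)} (hY : #Y = k) (x : Fin q) :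
    ∀ (L : List ℕ) (b : Bool),
      Nat.card {f // PathProper Y L f ∧ decide (x ∈ headColours Y L f) = b} =
        pathWeight q k (decide (x ∈ Y)) L b
  | [], b => by
    have hP : ∀ f, PathProper Y [] f := fun _ => ⟨fun u => u.1.elim0, fun u => u.1.elim0⟩
    simp only [hP, true_and, headColours, pathWeight]
    split_ifs with h
    · exact Nat.card_eq_one_iff_unique.mpr
        ⟨⟨fun _ _ => Subtype.ext (funext fun u => u.1.elim0)⟩, ⟨⟨fun u => u.1.elim0, h⟩⟩⟩
    · exact Nat.card_eq_zero.mpr (.inl ⟨fun f => h f.2⟩)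
  | a :: L, b => by
    rw [Nat.card_congr ((consEquiv a L).subtypeEquiv fun f => ?_),
      Nat.card_subtype_prod_eq_sum_bool (PathProper Y L) _
        (fun g => decide (x ∈ headColours Y L g)) (fun b' => transfer q (L.headD k) a b' b)
        fun g hg => by rw [card_injective_avoid_eq_transfer, card_headColours hY hg]]
    · simp only [pathWeight, card_pathProper hY x L]
    · simp only [pathProper_cons_iff, and_assoc]
      rfl

def pathScale (p q k : ℕ) : List ℕ → ℕ
  | [] => 1
  | a :: L => p ^ a * blockFactor p (q - L.headD k) a * pathScale p q k L

theorem pathWeight_map_mul {p : ℕ} (hp : 0 < p) (q k : ℕ) (b₀ : Bool) :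
    ∀ (L : List ℕ) (b : Bool), pathWeight (p * q) (p * k) b₀ (L.map (p * ·)) b =
      pathScale p q k L * pathWeight q k b₀ L b
  | [], b => by simp [pathWeight, pathScale]
  | a :: L, b => by
    have hhead : (L.map (p * ·)).headD (p * k) = p * L.headD k := by cases L <;> rfl
    simp only [List.map_cons, pathWeight, hhead, transfer_mul hp, pathWeight_map_mul hp q k b₀ L,
      pathScale, mul_sum]
    exact sum_congr rfl fun b' _ => by ring

section Theta

variable {n : ℕ} (S : Fin n → List ℕ) (k : ℕ)

def PathsProper (x : Fin q) (w : Fin k → Fin q) (f : ∀ i, PathVertex (S i) → Fin q) : Prop :=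
  ∀ i, PathProper (univ.image w) (S i) (f i) ∧ x ∉ headColours (univ.image w) (S i) (f i)

def thetaCount (q : ℕ) : ℕ :=
  q * ∑ b, transfer q 0 k false b * ∏ i, pathWeight q k b (S i) false

def thetaScale (p q : ℕ) : ℕ :=
  p * (p ^ k * blockFactor p q k) * ∏ i, pathScale p q k (S i)

def thetaFunEquiv : (CliqueThetaVertex 1 S k → Fin q) ≃
    Fin q × (Fin k → Fin q) × (∀ i, PathVertex (S i) → Fin q) where
  toFun c := (c (.inl 0), fun t => c (.inr (.inr t)), fun i u => c (.inr (.inl ⟨i, u⟩)))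
  invFun d
    | .inl _ => d.1
    | .inr (.inl ⟨i, u⟩) => d.2.2 i u
    | .inr (.inr t) => d.2.1 t
  left_inv c := funext <| by
    rintro (z | ⟨i, u⟩ | t)
    exacts [congrArg _ (congrArg _ (Subsingleton.elim 0 z)), rfl, rfl]
  right_inv d := rfl

variable {S k}

theorem thetaFunEquiv_symm_proper_iff (hS : ∀ i, S i ≠ [])
    (d : Fin q × (Fin k → Fin q) × (∀ i, PathVertex (S i) → Fin q)) :
    (∀ u v, (cliqueThetaGraph 1 S k).Adj u v →
      (thetaFunEquiv S k).symm d u ≠ (thetaFunEquiv S k).symm d v) ↔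
        Injective d.2.1 ∧ PathsProper S k d.1 d.2.1 d.2.2 := by
  obtain ⟨x, w, f⟩ := d
  set c := (thetaFunEquiv S k).symm (x, w, f)
  have hadj : (∀ u v, (cliqueThetaGraph 1 S k).Adj u v → c u ≠ c v) ↔
      ∀ u v, u ≠ v → cliqueThetaRel 1 S k u v → c u ≠ c v :=
    ⟨fun h u v hne hr => h u v ⟨hne, .inl hr⟩, fun h u v ⟨hne, hr⟩ =>
      hr.elim (h u v hne) fun hr => (h v u (Ne.symm hne) hr).symm⟩
  rw [hadj]
  constructor
  · intro h
    refine ⟨fun t t' htt => by_contra fun hne => h (.inr (.inr t)) (.inr (.inr t'))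
        (by simpa using hne) trivial htt, fun i => ⟨⟨fun u v huv hrel => ?_, fun u hu hmem => ?_⟩,
        fun hmem => ?_⟩⟩
    · exact h (.inr (.inl ⟨i, u⟩)) (.inr (.inl ⟨i, v⟩)) (by simpa using huv) ⟨rfl, hrel⟩
    · obtain ⟨t, -, ht⟩ := mem_image.mp hmem
      exact h (.inr (.inl ⟨i, u⟩)) (.inr (.inr t)) (by simp) hu ht.symm
    · obtain ⟨u, hu0, hux⟩ := (mem_headColours_of_ne_nil (hS i)).mp hmem
      exact h (.inl 0) (.inr (.inl ⟨i, u⟩)) (by simp) hu0 hux.symm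
  · rintro ⟨hw, hpath⟩ (z | ⟨i, l, u⟩ | t) (z' | ⟨i', l', v⟩ | t') hne hrel
    · exact absurd (congrArg _ (Subsingleton.elim z z')) hne
    · exact fun heq => (hpath i').2
        ((mem_headColours_of_ne_nil (hS i')).mpr ⟨⟨l', v⟩, hrel, heq.symm⟩)
    · exact hrel.elim
    · exact hrel.elim
    · obtain ⟨hii, hll⟩ := hrel
      obtain rfl := Fin.ext hii
      exact (hpath i).1.1 ⟨l, u⟩ ⟨l', v⟩ (fun h => hne (by rw [h])) hll
    · exact fun heq => (hpath i).1.2 ⟨l, u⟩ hrel (mem_image.mpr ⟨t', mem_univ _, heq.symm⟩)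
    · exact hrel.elim
    · exact hrel.elim
    · exact hw.ne (fun h => hne (by rw [h]))

theorem card_pathsProper {x : Fin q} {w : Fin k → Fin q} (hw : Injective w) :
    Nat.card {f // PathsProper S k x w f} =
      ∏ i, pathWeight q k (decide (x ∈ univ.image w)) (S i) false := by
  have hY : #(univ.image w) = k := by
    rw [card_image_of_injective _ hw, card_univ, Fintype.card_fin]
  refine (Nat.card_congr (Equiv.subtypePiEquivPi (β := fun i => PathVertex (S i) → Fin q)
    (p := fun i g => PathProper (univ.image w) (S i) g ∧
      x ∉ headColours (univ.image w) (S i) g))).trans ?_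
  rw [Nat.card_pi]
  refine prod_congr rfl fun i _ => ?_
  rw [← card_pathProper hY x]
  exact Nat.card_congr (Equiv.subtypeEquivRight fun f => by rw [decide_eq_false_iff_not])

theorem card_injective_decide_mem (x : Fin q) (b : Bool) :
    Nat.card {w : Fin k → Fin q // Injective w ∧ decide (x ∈ univ.image w) = b} =
      transfer q 0 k false b := by
  simpa using card_injective_avoid_eq_transfer q k ∅ x b

theorem card_injective_pathsProper (x : Fin q) :
    Nat.card {wf : (Fin k → Fin q) × (∀ i, PathVertex (S i) → Fin q) //
      Injective wf.1 ∧ PathsProper S k x wf.1 wf.2} =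
        ∑ b, transfer q 0 k false b * ∏ i, pathWeight q k b (S i) false := by
  rw [Nat.card_subtype_prod_eq_sum_bool Injective (PathsProper S k x)
    (fun w => decide (x ∈ univ.image w)) (fun b => ∏ i, pathWeight q k b (S i) false)
    fun w hw => card_pathsProper hw]
  simp only [card_injective_decide_mem]

theorem card_coloring_cliqueThetaGraph (hS : ∀ i, S i ≠ []) (q : ℕ) :
    Nat.card ((cliqueThetaGraph 1 S k).Coloring (Fin q)) = thetaCount S k q := by
  classical
  let eColoring : (cliqueThetaGraph 1 S k).Coloring (Fin q) ≃
      {c : CliqueThetaVertex 1 S k → Fin q //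
        ∀ u v, (cliqueThetaGraph 1 S k).Adj u v → c u ≠ c v} :=
    { toFun C := ⟨C, fun _ _ h => C.valid h⟩
      invFun c := SimpleGraph.Coloring.mk c.1 fun h => c.2 _ _ h
      left_inv _ := rfl
      right_inv _ := rfl }
  rw [Nat.card_congr (eColoring.trans ((thetaFunEquiv S k).symm.subtypeEquiv
      fun d => (thetaFunEquiv_symm_proper_iff hS d).symm).symm),
    Nat.card_congr (Equiv.subtypeProdEquivSigmaSubtype
      fun (x : Fin q) (wf : (Fin k → Fin q) × (∀ i, PathVertex (S i) → Fin q)) =>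
        Injective wf.1 ∧ PathsProper S k x wf.1 wf.2),
    Nat.card_sigma, thetaCount]
  simp only [card_injective_pathsProper, sum_const, card_univ, Fintype.card_fin, smul_eq_mul]

theorem thetaCount_map_mul {p : ℕ} (hp : 0 < p) (q : ℕ) :
    thetaCount (fun i => (S i).map (p * ·)) (p * k) (p * q) =
      thetaScale S k p q * thetaCount S k q := by
  have htransfer : ∀ b, transfer (p * q) 0 (p * k) false b =
      p ^ k * blockFactor p q k * transfer q 0 k false b := fun b => by
    simpa using transfer_mul hp q 0 k false b
  simp only [thetaCount, thetaScale, htransfer, pathWeight_map_mul hp, prod_mul_distrib,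
    Fintype.sum_bool]
  ring

end Theta

open Filter

def IsEventuallyPolynomial (f : ℕ → ℕ) : Prop :=
  ∃ R : ℤ[X], ∀ᶠ q : ℕ in atTop, R.eval (q : ℤ) = f q

namespace IsEventuallyPolynomial

theorem const (c : ℕ) : IsEventuallyPolynomial fun _ => c :=
  ⟨C (c : ℤ), .of_forall fun _ => eval_C⟩

theorem mul {f g : ℕ → ℕ} (hf : IsEventuallyPolynomial f) (hg : IsEventuallyPolynomial g) :
    IsEventuallyPolynomial fun q => f q * g q := by
  obtain ⟨R, hR⟩ := hf
  obtain ⟨T, hT⟩ := hg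
  exact ⟨R * T, (hR.and hT).mono fun q h => by rw [eval_mul, h.1, h.2, Nat.cast_mul]⟩

theorem prod {ι : Type*} (s : Finset ι) {f : ι → ℕ → ℕ}
    (hf : ∀ i ∈ s, IsEventuallyPolynomial (f i)) :
    IsEventuallyPolynomial fun q => ∏ i ∈ s, f i q := by
  classical
  induction s using Finset.induction_on with
  | empty => simpa using const 1
  | insert i s hi ih =>
    simp only [prod_insert hi]
    exact (hf i (mem_insert_self i s)).mul (ih fun j hj => hf j (mem_insert_of_mem hj))

theorem descFactorial_mul_sub {m : ℕ} (hm : 0 < m) (c d : ℕ) :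
    IsEventuallyPolynomial fun q => (m * q - c).descFactorial d := by
  refine ⟨(descPochhammer ℤ d).comp (C (m : ℤ) * X - C (c : ℤ)),
    (eventually_ge_atTop c).mono fun q hq => ?_⟩
  have hc : c ≤ m * q := hq.trans (Nat.le_mul_of_pos_left q hm)
  rw [eval_comp, ← descPochhammer_eval_eq_descFactorial, Nat.cast_sub hc]
  simp

end IsEventuallyPolynomial

theorem isEventuallyPolynomial_blockFactor {p : ℕ} (hp : 0 < p) (s a : ℕ) :
    IsEventuallyPolynomial fun q => blockFactor p (q - s) a := by
  refine IsEventuallyPolynomial.prod _ fun u _ => ?_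
  simp only [Nat.sub_sub, Nat.mul_sub]
  exact IsEventuallyPolynomial.descFactorial_mul_sub hp _ _

theorem isEventuallyPolynomial_pathScale {p : ℕ} (hp : 0 < p) (k : ℕ) :
    ∀ L : List ℕ, IsEventuallyPolynomial fun q => pathScale p q k L
  | [] => IsEventuallyPolynomial.const 1
  | a :: L =>
    ((IsEventuallyPolynomial.const _).mul (isEventuallyPolynomial_blockFactor hp _ a)).mul
      (isEventuallyPolynomial_pathScale hp k L)

theorem isEventuallyPolynomial_thetaScale {n : ℕ} (S : Fin n → List ℕ) (k : ℕ) {p : ℕ}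
    (hp : 0 < p) : IsEventuallyPolynomial (thetaScale S k p) :=
  ((IsEventuallyPolynomial.const p).mul ((IsEventuallyPolynomial.const _).mul
    (by simpa using isEventuallyPolynomial_blockFactor hp 0 k))).mul
    (IsEventuallyPolynomial.prod _ fun i _ => isEventuallyPolynomial_pathScale hp k (S i))

end CliqueTheta

theorem Polynomial.eq_of_eventually_eval_natCast_eq {R : Type*} [CommRing R] [IsDomain R]
    [CharZero R] {A B : R[X]} (h : ∀ᶠ q : ℕ in Filter.atTop, A.eval (q : R) = B.eval (q : R)) :
    A = B := by
  refine eq_of_infinite_eval_eq A B (Set.Infinite.mono ?_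
    ((Nat.frequently_atTop_iff_infinite.mp h.frequently).image Nat.cast_injective.injOn))
  rintro _ ⟨q, hq, rfl⟩
  exact hq

open CliqueTheta

theorem clique_theta_root_scaling_general
    (n : ℕ) (S : Fin n → List ℕ)
    (hS : ∀ i, S i ≠ [])
    (k p : ℕ) (hp : 0 < p)
    (P P' : Polynomial ℤ)
    (hP : IsChromaticPoly (cliqueThetaGraph 1 S k) P)
    (hP' : IsChromaticPoly (cliqueThetaGraph 1 (fun i => (S i).map (p * ·)) (p * k)) P')
    (α : ℂ) (hroot : Polynomial.aeval α P = 0) :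
    Polynomial.aeval ((p : ℂ) * α) P' = 0 := by
  obtain ⟨R, hR⟩ := isEventuallyPolynomial_thetaScale S k hp
  have hcomp : P'.comp (C (p : ℤ) * X) = R * P := by
    refine eq_of_eventually_eval_natCast_eq (hR.mono fun q hq => ?_)
    have hpq : P'.eval ((p * q : ℕ) : ℤ) = R.eval (q : ℤ) * P.eval (q : ℤ) := by
      rw [hP', hP, card_coloring_cliqueThetaGraph hS,
        card_coloring_cliqueThetaGraph (by simpa using hS), thetaCount_map_mul hp, hq,
        Nat.cast_mul]
    simpa using hpq
  simpa [aeval_comp, hroot] using congrArg (aeval α) hcomp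

/-- If `α` is a non-integer chromatic root of `T(1,S_1,…,S_n,k)`, then
`pα` is a chromatic root of `T(1,pS_1,…,pS_n,pk)`. -/
theorem clique_theta_root_scaling
    (n : ℕ) (hn : 2 ≤ n) (S : Fin n → List ℕ)
    (hS : ∀ i, S i ≠ []) (hpos : ∀ i, ∀ a ∈ S i, 0 < a)
    (k p : ℕ) (hk : 0 < k) (hp : 0 < p)
    (P P' : Polynomial ℤ)
    (hP : IsChromaticPoly (cliqueThetaGraph 1 S k) P)
    (hP' : IsChromaticPoly (cliqueThetaGraph 1 (fun i => (S i).map (p * ·)) (p * k)) P')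
    (α : ℂ) (hα : ∀ z : ℤ, α ≠ (z : ℂ)) (hroot : Polynomial.aeval α P = 0) :
    Polynomial.aeval ((p : ℂ) * α) P' = 0 :=
  clique_theta_root_scaling_general n S hS k p hp P P' hP hP' α hroot
end
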